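/- Let d_B be a special type B partition with Kazhdan–Lusztig data: let c(d_B) be the number of type B2 blocks in its block decomposition, and let Ā(O_B) denote Lusztig's canonical quotient of the component group of the corresponding special nilpotent orbit O_B in so_{2n+1}. Then #Ā(O_B) = 2^{c(d_B)}. Equivalently, using Sommers' description that Ā(O_B) ≅ (Z/2)^q where q + 1 is the number of corners of the Young diagram of d_B having both odd length and odd height: the number of such corners equals c(d_B) + 1. -/

import Mathlib

/-- `[b₁, b₁, b₂, b₂, ...]`: each entry of `bs` doubled. -/
def pairList (bs : List ℕ) : List ℕ := bs.flatMap fun b => [b, b]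

/-- Type B1 block: `[a, a]` with `a` odd. -/
def IsB1 (T : List ℕ) : Prop := ∃ a, Odd a ∧ T = [a, a]

/-- Type B1* block: `[b, b]` with `b` even (and positive). -/
def IsB1s (T : List ℕ) : Prop := ∃ b, 0 < b ∧ Even b ∧ T = [b, b]

/-- Type B2 block: `[a₁, b₁², ..., b_k², a₂]` with `a₁, a₂` odd, all `b_j` even,
`a₁ > b₁ ≥ ... ≥ b_k > a₂` and `k ≥ 0`. -/
def IsB2 (T : List ℕ) : Prop :=
  ∃ a₁ a₂ bs, Odd a₁ ∧ Odd a₂ ∧ a₂ < a₁ ∧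
    (∀ b ∈ bs, Even b ∧ a₂ < b ∧ b < a₁) ∧ List.Pairwise (· ≥ ·) bs ∧
    T = a₁ :: (pairList bs ++ [a₂])

/-- Type B3 block: `[a, b₁², ..., b_k²]` with `a` odd, all `b_j` even (positive),
`a > b₁ ≥ ... ≥ b_k`, `k ≥ 0`. -/
def IsB3 (T : List ℕ) : Prop :=
  ∃ a bs, Odd a ∧ (∀ b ∈ bs, 0 < b ∧ Even b ∧ b < a) ∧ List.Pairwise (· ≥ ·) bs ∧
    T = a :: pairList bs

/-- A type B partition of `N`, as a weakly decreasing list of positive integers summing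
to `N` in which every even part occurs with even multiplicity. -/
def IsTypeBList (d : List ℕ) (N : ℕ) : Prop :=
  List.Pairwise (· ≥ ·) d ∧ (∀ x ∈ d, 0 < x) ∧ d.sum = N ∧
    ∀ i, Even i → Even (d.count i)

/-- `Ts` is a decomposition of `d` into consecutive blocks of types B1, B1*, B2, B3. -/
def IsBlockDecomp (d : List ℕ) (Ts : List (List ℕ)) : Prop :=
  d = Ts.flatten ∧ ∀ T ∈ Ts, IsB1 T ∨ IsB1s T ∨ IsB2 T ∨ IsB3 T

/-- The block of type B3 appears exactly once, and at the end. -/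
def B3AtEnd (Ts : List (List ℕ)) : Prop :=
  ∃ Ts' T, Ts = Ts' ++ [T] ∧ IsB3 T ∧ ∀ T' ∈ Ts', ¬ IsB3 T'


/-- The transpose (dual) partition of a list partition. -/
def transposeL (d : List ℕ) : List ℕ :=
  (List.range d.headI).map fun i => d.countP fun x => decide (i + 1 ≤ x)

/-!
Only the odd parts matter: since every even part occurs with even multiplicity, the height
at an odd part `v` has the parity of the number of odd parts `≥ v`. Block by block, the odd
parts are `a, a` (B1), nothing (B1*), `a₁ > a₂` (B2) and finally a single `a` (B3), so they
form a sequence `x₁ ≥ y₁ ≥ x₂ ≥ y₂ ≥ ⋯ ≥ xₖ ≥ yₖ ≥ a`. In it, the values `v` with an odd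
number of terms `≥ v` are `a` and exactly those `xⱼ` with `xⱼ > yⱼ`, i.e. one per B2 block.
-/

lemma List.natCard_fin_get {α : Type*} (l : List α) (p : α → Prop) [DecidablePred p] :
    Nat.card {i : Fin l.length // p (l.get i)} = l.countP (p ·) := by
  simp only [Nat.card_eq_fintype_card, Fintype.card_subtype, Finset.card_filter,
    List.get_eq_getElem, Fin.sum_univ_fun_getElem l (fun x => if p x then 1 else 0)]
  induction l with
  | nil => rfl
  | cons a l ih => by_cases h : p a <;> simp [h, ih, add_comm]

lemma List.even_countP_of_even_count {α : Type*} [DecidableEq α] (l : List α) (p : α → Bool)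
    (h : ∀ i, p i → Even (l.count i)) : Even (l.countP p) := by
  rw [List.countP_eq_length_filter, ← Multiset.coe_card, ← Multiset.toFinset_sum_count_eq]
  refine Finset.even_sum _ fun i hi => ?_
  simp only [Multiset.mem_toFinset, Multiset.mem_coe, List.mem_filter] at hi
  simpa [List.count_filter hi.2] using h i hi.2

section LinearOrder

variable {α : Type*} [LinearOrder α]

def oddHeightCorners (l : List α) : Finset α :=
  l.toFinset.filter fun v => Odd (l.countP (v ≤ ·))

lemma countP_le_eq_zero {l : List α} {v : α} (h : ∀ w ∈ l, w < v) : l.countP (v ≤ ·) = 0 :=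
  List.countP_eq_zero.2 fun w hw => by simpa using h w hw

lemma mem_of_countP_le_pos {l : List α} {v : α} (hl : ∀ w ∈ l, w ≤ v)
    (h : 0 < l.countP (v ≤ ·)) : v ∈ l := by
  obtain ⟨w, hw, hvw⟩ := List.countP_pos_iff.1 h
  exact le_antisymm (hl w hw) (by simpa using hvw) ▸ hw

lemma mem_oddHeightCorners_cons_cons {x y v : α} {l : List α}
    (hs : (x :: y :: l).Pairwise (· ≥ ·)) :
    v ∈ oddHeightCorners (x :: y :: l) ↔ (v = x ∧ y < x) ∨ v ∈ oddHeightCorners l := by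
  obtain ⟨⟨hyx, hlx⟩, hly, -⟩ : (y ≤ x ∧ ∀ w ∈ l, w ≤ x) ∧ (∀ w ∈ l, w ≤ y) ∧ _ := by
    simpa using hs
  have hcount : (x :: y :: l).countP (v ≤ ·) =
      l.countP (v ≤ ·) + (if v ≤ y then 1 else 0) + (if v ≤ x then 1 else 0) := by
    simp [List.countP_cons]
  simp only [oddHeightCorners, Finset.mem_filter, List.mem_toFinset, List.mem_cons, hcount]
  rcases lt_or_ge y v with hyv | hvy
  · have hvl : v ∉ l := fun hv => (hly v hv).not_gt hyv
    rw [countP_le_eq_zero fun w hw => (hly w hw).trans_lt hyv, if_neg hyv.not_ge]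
    constructor
    · rintro ⟨rfl | rfl | hv, -⟩
      · exact Or.inl ⟨rfl, hyv⟩
      · exact absurd hyv (lt_irrefl _)
      · exact absurd hv hvl
    · rintro (⟨rfl, -⟩ | ⟨hv, -⟩)
      · simp
      · exact absurd hv hvl
  · have hmem : (v = x ∨ v = y ∨ v ∈ l) → Odd (l.countP (v ≤ ·)) → v ∈ l := by
      rintro (rfl | rfl | hv) hodd
      · exact mem_of_countP_le_pos hlx hodd.pos
      · exact mem_of_countP_le_pos hly hodd.pos
      · exact hv
    rw [if_pos hvy, if_pos (hvy.trans hyx), Nat.odd_add_one, Nat.odd_add_one, not_not]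
    constructor
    · exact fun ⟨hv, hodd⟩ => Or.inr ⟨hmem hv hodd, hodd⟩
    · rintro (⟨rfl, hlt⟩ | ⟨hv, hodd⟩)
      · exact absurd hvy hlt.not_ge
      · exact ⟨Or.inr (Or.inr hv), hodd⟩

lemma card_oddHeightCorners_cons_cons {x y : α} {l : List α}
    (hs : (x :: y :: l).Pairwise (· ≥ ·)) :
    (oddHeightCorners (x :: y :: l)).card =
      (oddHeightCorners l).card + if y < x then 1 else 0 := by
  by_cases hyx : y < x
  · have hx : x ∉ oddHeightCorners l := fun hx => by
      have hxl : x ∈ l := List.mem_toFinset.1 (Finset.mem_of_mem_filter x hx)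
      exact hyx.not_ge (List.rel_of_pairwise_cons (List.pairwise_cons.1 hs).2 hxl)
    have hset : oddHeightCorners (x :: y :: l) = insert x (oddHeightCorners l) := by
      ext v
      simp [mem_oddHeightCorners_cons_cons hs, hyx]
    rw [hset, Finset.card_insert_of_notMem hx, if_pos hyx]
  · have hset : oddHeightCorners (x :: y :: l) = oddHeightCorners l := by
      ext v
      simp [mem_oddHeightCorners_cons_cons hs, hyx]
    rw [hset, if_neg hyx, add_zero]

lemma oddHeightCorners_singleton (a : α) : oddHeightCorners [a] = {a} := by
  ext v
  simp +contextual [oddHeightCorners]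

end LinearOrder

lemma filter_odd_pairList {bs : List ℕ} (h : ∀ b ∈ bs, Even b) :
    (pairList bs).filter (Odd ·) = [] := by
  simp only [List.filter_eq_nil_iff, decide_eq_true_eq, Nat.not_odd_iff_even]
  intro x hx
  exact h x (by simpa [pairList] using hx)

lemma IsB1.filter_odd {T : List ℕ} (h : IsB1 T) : ∃ a, T.filter (Odd ·) = [a, a] := by
  obtain ⟨a, ha, rfl⟩ := h
  exact ⟨a, by simp [ha]⟩

lemma IsB1s.filter_odd {T : List ℕ} (h : IsB1s T) : T.filter (Odd ·) = [] := by
  obtain ⟨b, -, hb, rfl⟩ := h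
  simp [Nat.not_odd_iff_even.2 hb]

lemma IsB2.filter_odd {T : List ℕ} (h : IsB2 T) :
    ∃ x y, y < x ∧ T.filter (Odd ·) = [x, y] := by
  obtain ⟨a₁, a₂, bs, h₁, h₂, hlt, hbs, -, rfl⟩ := h
  refine ⟨a₁, a₂, hlt, ?_⟩
  rw [List.filter_cons, List.filter_append, filter_odd_pairList fun b hb => (hbs b hb).1]
  simp [h₁, h₂]

lemma IsB3.filter_odd {T : List ℕ} (h : IsB3 T) : ∃ a, T.filter (Odd ·) = [a] := by
  obtain ⟨a, bs, ha, hbs, -, rfl⟩ := h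
  refine ⟨a, ?_⟩
  rw [List.filter_cons, filter_odd_pairList fun b hb => (hbs b hb).2.1]
  simp [ha]

lemma IsB3.not_isB2 {T : List ℕ} (h : IsB3 T) : ¬ IsB2 T := fun h₂ => by
  obtain ⟨a, ha⟩ := h.filter_odd
  obtain ⟨x, y, -, hxy⟩ := h₂.filter_odd
  simp [ha] at hxy

open Classical in
lemma card_oddHeightCorners_filter_odd_block_append {T R : List ℕ}
    (hT : IsB1 T ∨ IsB1s T ∨ IsB2 T) (hs : ((T ++ R).filter (Odd ·)).Pairwise (· ≥ ·)) :
    (oddHeightCorners ((T ++ R).filter (Odd ·))).card =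
      (oddHeightCorners (R.filter (Odd ·))).card + if IsB2 T then 1 else 0 := by
  rw [List.filter_append] at hs ⊢
  rcases hT with hT | hT | hT
  · obtain ⟨a, ha⟩ := hT.filter_odd
    have hT₂ : ¬ IsB2 T := fun h₂ => by
      obtain ⟨x, y, hyx, hxy⟩ := h₂.filter_odd
      simp only [ha, List.cons.injEq] at hxy
      omega
    simp only [ha, List.cons_append, List.nil_append] at hs ⊢
    rw [card_oddHeightCorners_cons_cons hs, if_neg (lt_irrefl a), if_neg hT₂]
  · have hT₂ : ¬ IsB2 T := fun h₂ => by
      obtain ⟨x, y, -, hxy⟩ := h₂.filter_odd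
      simp [hT.filter_odd] at hxy
    simp [hT.filter_odd, hT₂]
  · obtain ⟨x, y, hyx, hxy⟩ := hT.filter_odd
    simp only [hxy, List.cons_append, List.nil_append] at hs ⊢
    rw [card_oddHeightCorners_cons_cons hs, if_pos hyx, if_pos hT]

open Classical in
lemma card_oddHeightCorners_filter_odd_flatten {Ts : List (List ℕ)} {T₀ : List ℕ}
    (hT₀ : IsB3 T₀) (hTs : ∀ T ∈ Ts, IsB1 T ∨ IsB1s T ∨ IsB2 T)
    (hs : (Ts.flatten ++ T₀).Pairwise (· ≥ ·)) :
    (oddHeightCorners ((Ts.flatten ++ T₀).filter (Odd ·))).card = Ts.countP (IsB2 ·) + 1 := by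
  induction Ts with
  | nil =>
    obtain ⟨a, ha⟩ := hT₀.filter_odd
    simp [ha, oddHeightCorners_singleton]
  | cons T Ts ih =>
    rw [List.flatten_cons, List.append_assoc] at hs ⊢
    rw [card_oddHeightCorners_filter_odd_block_append (hTs T (by simp)) (hs.filter _),
      ih (fun T' hT' => hTs T' (by simp [hT'])) (List.pairwise_append.1 hs).2.1,
      List.countP_cons]
    simp only [decide_eq_true_eq]
    omega

lemma odd_countP_le_iff_filter_odd {d : List ℕ} (hd : ∀ i, Even i → Even (d.count i)) (v : ℕ) :
    Odd (d.countP (v ≤ ·)) ↔ Odd ((d.filter (Odd ·)).countP (v ≤ ·)) := by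
  have heven : Even ((d.filter fun w => !decide (Odd w)).countP (v ≤ ·)) := by
    rw [List.countP_filter]
    refine d.even_countP_of_even_count _ fun i hi => hd i (Nat.not_odd_iff_even.1 ?_)
    simp_all
  rw [d.countP_eq_countP_filter_add _ (Odd ·), Nat.odd_add, iff_true_intro heven, iff_true]

lemma natCard_oddCorners_eq_card_oddHeightCorners {d : List ℕ}
    (hd : ∀ i, Even i → Even (d.count i)) :
    Nat.card {v : ℕ // v ∈ d ∧ Odd v ∧ Odd (Nat.card {i : Fin d.length // v ≤ d.get i})} =
      (oddHeightCorners (d.filter (Odd ·))).card := by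
  rw [← Nat.card_eq_finsetCard]
  refine Nat.card_congr (Equiv.subtypeEquivRight fun v => ?_)
  simp only [List.natCard_fin_get, odd_countP_le_iff_filter_odd hd, oddHeightCorners,
    Finset.mem_filter, List.mem_toFinset, List.mem_filter, decide_eq_true_eq, and_assoc]

/-- A corner of the Young diagram of `d` is encoded by its part value `v`: its length is `v`
and its height is `#{i | v ≤ dᵢ}`. -/
theorem stmt18_general (n : ℕ) (d : List ℕ) (hd : IsTypeBList d (2 * n + 1))
    (Ts : List (List ℕ)) (hTs : IsBlockDecomp d Ts ∧ B3AtEnd Ts) :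
    Nat.card {v : ℕ // v ∈ d ∧ Odd v ∧
        Odd (Nat.card {i : Fin d.length // v ≤ d.get i})}
      = Nat.card {i : Fin Ts.length // IsB2 (Ts.get i)} + 1 := by
  classical
  obtain ⟨hsorted, -, -, hcount⟩ := hd
  obtain ⟨⟨rfl, hblocks⟩, Ts, T₀, rfl, hT₀, hnoB3⟩ := hTs
  have hTs : ∀ T ∈ Ts, IsB1 T ∨ IsB1s T ∨ IsB2 T := fun T hT => by
    simpa [hnoB3 T hT] using hblocks T (by simp [hT])
  rw [List.flatten_append, List.flatten_singleton] at hsorted hcount ⊢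
  rw [natCard_oddCorners_eq_card_oddHeightCorners hcount, List.natCard_fin_get,
    card_oddHeightCorners_filter_odd_flatten hT₀ hTs hsorted]
  simp [hT₀.not_isB2]

/-- for a special type B partition `d` of `2n+1` with block decomposition
`Ts`, the number of corners of the Young diagram of `d` having both odd length and odd
height (a corner corresponds to a distinct part value `v`, of length `v` and height
`#{i : d_i ≥ v}`) equals the number of B2 blocks of `Ts` plus one.  By Sommers'
description, the left-hand side minus one is the `𝔽₂`-rank of Lusztig's canonical
quotient `Ā(O_B)`, so this says `#Ā(O_B) = 2^{c(d_B)}`. -/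
theorem stmt18 (n : ℕ) (d : List ℕ) (hd : IsTypeBList d (2 * n + 1))
    (hspec : IsTypeBList (transposeL d) (2 * n + 1))
    (Ts : List (List ℕ)) (hTs : IsBlockDecomp d Ts ∧ B3AtEnd Ts) :
    Nat.card {v : ℕ // v ∈ d ∧ Odd v ∧
        Odd (Nat.card {i : Fin d.length // v ≤ d.get i})}
      = Nat.card {i : Fin Ts.length // IsB2 (Ts.get i)} + 1 :=
  stmt18_general n d hd Ts hTs
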